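/- arXiv:0711.2696 — 5 statements merged into one kernel-verified Lean document; each statement's English description precedes it below -/
import Mathlib

section
/- Let Q be any n×n symmetric complex matrix. Then rank(Q) ≤ min over all vertex subsets S of G(Q) of (n − |S| + |N(S)|). In particular, every non-expanding set of rows of Q is linearly dependent. -/
open MeasureTheory Finset

attribute [local instance] Classical.propDecidable

set_option maxHeartbeats 800000

noncomputable section RankSparse

/-- Bernoulli measure on `Bool` with success probability `p`. -/
def bern (p : ℝ) : Measure Bool :=
  (Real.toNNReal p) • Measure.dirac true + (Real.toNNReal (1 - p)) • Measure.dirac false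

instance (p : ℝ) : IsFiniteMeasure (bern p) := by unfold bern; infer_instance

/-- Product measure: i.i.d. Bernoulli(p) entries indexed by pairs `(i,j)`. -/
def entriesMeasure (n : ℕ) (p : ℝ) : Measure (Fin n → Fin n → Bool) :=
  Measure.pi fun _ => Measure.pi fun _ => bern p

/-- The random sparsified symmetric matrix `Q(W,p)`: for `i ≤ j`,
`q_{ij} = w_{ij} ξ_{ij}` with `ξ_{ij}` Bernoulli, and `q_{ji} = q_{ij}`. -/
def QW {n : ℕ} (W : Matrix (Fin n) (Fin n) ℂ) (ω : Fin n → Fin n → Bool) :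
    Matrix (Fin n) (Fin n) ℂ :=
  Matrix.of fun i j =>
    if i ≤ j then (if ω i j then W i j else 0) else (if ω j i then W j i else 0)

/-- The adjacency relation of the graph `G(Q)` of a symmetric matrix:
`i` adjacent to `j` iff `q_{ij} ≠ 0` (self-loops allowed). -/
def adjOf {n : ℕ} (Q : Matrix (Fin n) (Fin n) ℂ) : Fin n → Fin n → Prop :=
  fun i j => Q i j ≠ 0

/-- The neighborhood `N(S)` of a vertex set: all vertices adjacent to at
least one vertex of `S` (may intersect `S`). -/
def nbr {n : ℕ} (A : Fin n → Fin n → Prop) (S : Finset (Fin n)) : Finset (Fin n) :=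
  univ.filter fun v => ∃ u ∈ S, A u v

/-- `S` is non-expanding if `|N(S)| < |S|`. -/
def nonExpanding {n : ℕ} (A : Fin n → Fin n → Prop) (S : Finset (Fin n)) : Prop :=
  (nbr A S).card < S.card

/-- Minimally non-expanding: non-expanding with no proper non-expanding subset. -/
def minNonExpanding {n : ℕ} (A : Fin n → Fin n → Prop) (S : Finset (Fin n)) : Prop :=
  nonExpanding A S ∧ ∀ T ⊂ S, ¬ nonExpanding A T

/-- Degree of a vertex: number of its neighbors (a loop makes `v` its own neighbor). -/
def deg {n : ℕ} (A : Fin n → Fin n → Prop) (v : Fin n) : ℕ :=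
  (univ.filter fun u => A v u).card

/-- A set is unobstructed if it contains no non-expanding subset. -/
def unobstructed {n : ℕ} (A : Fin n → Fin n → Prop) (S : Finset (Fin n)) : Prop :=
  ∀ T ⊆ S, ¬ nonExpanding A T

/-- A set is `t`-unobstructed if it contains no non-expanding subset of size at most `t`. -/
def tUnobstructed {n : ℕ} (t : ℕ) (A : Fin n → Fin n → Prop) (S : Finset (Fin n)) : Prop :=
  ∀ T ⊆ S, T.card ≤ t → ¬ nonExpanding A T

/-- Maximum size of an unobstructed vertex set. -/
def maxUnobstructed {n : ℕ} (A : Fin n → Fin n → Prop) : ℕ :=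
  ((univ : Finset (Finset (Fin n))).filter fun S => unobstructed A S).sup Finset.card

/-- Maximum size of a `t`-unobstructed vertex set. -/
def maxTUnobstructed {n : ℕ} (t : ℕ) (A : Fin n → Fin n → Prop) : ℕ :=
  ((univ : Finset (Finset (Fin n))).filter fun S => tUnobstructed t A S).sup Finset.card

/-- A symmetric matrix is `t`-saturated if its rank equals the maximum size of a
`t`-unobstructed set of vertices of its graph. -/
def saturated (t : ℕ) {n : ℕ} (Q : Matrix (Fin n) (Fin n) ℂ) : Prop :=
  Q.rank = maxTUnobstructed t (adjOf Q)

/-- `min_{S} (n - |S| + |N(S)|)` over all vertex subsets of `G(Q)`. -/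
def rankFormula {n : ℕ} (Q : Matrix (Fin n) (Fin n) ℂ) : ℕ :=
  (univ : Finset (Finset (Fin n))).inf' univ_nonempty
    fun S => n - S.card + (nbr (adjOf Q) S).card

/-- The induced graph on the vertex set `S` is connected. -/
def connOn {n : ℕ} (A : Fin n → Fin n → Prop) (S : Finset (Fin n)) : Prop :=
  ∀ u ∈ S, ∀ v ∈ S, Relation.ReflTransGen (fun a b => a ∈ S ∧ b ∈ S ∧ A a b) u v

/-- There is a cycle of length `ℓ` through `v` (a cycle of length 1 is a self-loop). -/
def cycleThrough {n : ℕ} (A : Fin n → Fin n → Prop) (ℓ : ℕ) (v : Fin n) : Prop :=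
  ∃ f : ZMod ℓ → Fin n, Function.Injective f ∧ (∀ i, A (f i) (f (i + 1))) ∧ ∃ i, f i = v

/-- Well-separated graph (for parameters `N`, the ambient size, and `s`):
(W1) every connected subgraph on at most `5s` vertices has at most `s-1` vertices of
degree at most `ln ln N`; (W2) no cycle of length 1 or of length between 3 and `12 s`
contains a vertex of degree at most `ln ln N`. -/
def wellSeparated (N s : ℕ) {n : ℕ} (A : Fin n → Fin n → Prop) : Prop :=
  (∀ S : Finset (Fin n), S.card ≤ 5 * s → connOn A S →
      (S.filter fun v => (deg A v : ℝ) ≤ Real.log (Real.log N)).card ≤ s - 1) ∧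
  (∀ v : Fin n, (deg A v : ℝ) ≤ Real.log (Real.log N) →
      ∀ ℓ : ℕ, (ℓ = 1 ∨ (3 ≤ ℓ ∧ ℓ ≤ 12 * s)) → ¬ cycleThrough A ℓ v)

/-- Number of edges joining `S` to its complement. -/
def crossEdges {n : ℕ} (A : Fin n → Fin n → Prop) (S : Finset (Fin n)) : ℕ :=
  (univ.filter fun e : Fin n × Fin n => e.1 ∈ S ∧ e.2 ∉ S ∧ A e.1 e.2).card

/-- Small set expander (for ambient size `N` and parameter `s`). -/
def smallSetExpander (N s : ℕ) {n : ℕ} (A : Fin n → Fin n → Prop) : Prop :=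
  ∀ S : Finset (Fin n), (S.card : ℝ) ≤ (N : ℝ) / (Real.log N) ^ ((3:ℝ)/2) →
    (S.card ≤ crossEdges A S ∨
      ∃ S' ⊆ S, S'.card ≤ s - 1 ∧ crossEdges A S' < S'.card)

/-- Number of edges induced on `S` (counting loops once). -/
def inducedEdges {n : ℕ} (A : Fin n → Fin n → Prop) (S : Finset (Fin n)) : ℕ :=
  (univ.filter fun e : Fin n × Fin n => e.1 ∈ S ∧ e.2 ∈ S ∧ e.1 ≤ e.2 ∧ A e.1 e.2).card

/-- Locally sparse: every nonempty set of at most `N/(ln N)^{3/2}` vertices induces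
fewer than `4|S|` edges (i.e. has average degree less than 8). -/
def locallySparse (N : ℕ) {n : ℕ} (A : Fin n → Fin n → Prop) : Prop :=
  ∀ S : Finset (Fin n), S.Nonempty → (S.card : ℝ) ≤ (N : ℝ) / (Real.log N) ^ ((3:ℝ)/2) →
    inducedEdges A S < 4 * S.card

/-- `S` is nice: at least two vertices are each adjacent to exactly one vertex of `S`. -/
def nice {n : ℕ} (A : Fin n → Fin n → Prop) (S : Finset (Fin n)) : Prop :=
  2 ≤ (univ.filter fun v => (S.filter fun u => A v u).card = 1).card

/-- `S` is nearly nice: at least one vertex is adjacent to exactly one vertex of `S`. -/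
def nearlyNice {n : ℕ} (A : Fin n → Fin n → Prop) (S : Finset (Fin n)) : Prop :=
  1 ≤ (univ.filter fun v => (S.filter fun u => A v u).card = 1).card

/-- A good graph (for ambient size `N`, parameter `s` and probability `p`; here
`k = ln ln N / (2p)`). -/
def goodGraph (N s : ℕ) (p : ℝ) {n : ℕ} (A : Fin n → Fin n → Prop) : Prop :=
  (∀ S : Finset (Fin n), S.Nonempty → ¬ nice A S → (∀ T ⊂ S, T.Nonempty → nice A T) →
      (Real.log (Real.log N) / (2 * p) + 1 ≤ (S.card : ℝ) ∨
        ∃ T ⊆ S, T.card ≤ s - 1 ∧ nonExpanding A T)) ∧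
  (∀ S : Finset (Fin n), S.Nonempty → ¬ nearlyNice A S →
      (∀ T ⊂ S, T.Nonempty → nearlyNice A T) →
      (Real.log (Real.log N) / (2 * p) + 1 ≤ (S.card : ℝ) ∨
        (S.card ≤ s - 1 ∧ nonExpanding A S))) ∧
  (((univ.filter fun v : Fin n => deg A v < s).card : ℝ) ≤ 1 / (p * Real.log N)) ∧
  wellSeparated N s A

/-- A symmetric matrix is good if its graph is good. -/
def goodMatrix (N s : ℕ) (p : ℝ) {n : ℕ} (Q : Matrix (Fin n) (Fin n) ℂ) : Prop :=
  goodGraph N s p (adjOf Q)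

/-- The upper-left `min m n × min m n` minor of a matrix. -/
def minor {n : ℕ} (Q : Matrix (Fin n) (Fin n) ℂ) (m : ℕ) :
    Matrix (Fin (min m n)) (Fin (min m n)) ℂ :=
  Q.submatrix (Fin.castLE (min_le_right m n)) (Fin.castLE (min_le_right m n))

end RankSparse

/-! The rows indexed by `S` vanish outside `N(S)`, so they span a space of dimension at most
`|N(S)|`, while the other `n - |S|` rows raise the dimension by at most `n - |S|`. -/

open Module Submodule

theorem finrank_span_le_card_of_forall_eq_zero {K ι : Type*} [Field K] [Fintype ι]
    (s : Set (ι → K)) (N : Finset ι) (h : ∀ v ∈ s, ∀ i ∉ N, v i = 0) :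
    finrank K (span K s) ≤ N.card := by
  have hle : span K s ≤ Pi.spanSubset K (N : Set ι) :=
    span_le.mpr fun v hv => Pi.mem_spanSubset_iff.mpr (h v hv)
  simpa using finrank_mono hle

theorem finrank_span_range_le_card_compl_add {K ι V : Type*} [Field K] [AddCommGroup V]
    [Module K V] [Fintype ι] [DecidableEq ι] (v : ι → V) (S : Finset ι) :
    finrank K (span K (Set.range v)) ≤ Sᶜ.card + finrank K (span K (v '' S)) := by
  have hrange : Set.range v = v '' ↑Sᶜ ∪ v '' S := by
    rw [← Set.image_union, Finset.coe_compl, Set.compl_union_self, Set.image_univ]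
  have hcompl : finrank K (span K (v '' ↑Sᶜ)) ≤ Sᶜ.card := by
    have := finrank_span_finset_le_card (R := K) (Sᶜ.image v)
    rw [Set.finrank, Finset.coe_image] at this
    exact this.trans Finset.card_image_le
  have := FiniteDimensional.span_of_finite K (Set.toFinite (v '' ↑Sᶜ))
  have := FiniteDimensional.span_of_finite K (Set.toFinite (v '' S))
  calc finrank K (span K (Set.range v))
        = finrank K ↥(span K (v '' ↑Sᶜ) ⊔ span K (v '' S)) := by rw [hrange, span_union]
    _ ≤ finrank K (span K (v '' ↑Sᶜ)) + finrank K (span K (v '' S)) :=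
        finrank_add_le_finrank_add_finrank _ _
    _ ≤ Sᶜ.card + finrank K (span K (v '' S)) := by gcongr

theorem finrank_span_rows_le_card_nbr {n : ℕ} (Q : Matrix (Fin n) (Fin n) ℂ)
    (S : Finset (Fin n)) : finrank ℂ (span ℂ (Q '' S)) ≤ (nbr (adjOf Q) S).card := by
  refine finrank_span_le_card_of_forall_eq_zero _ _ ?_
  rintro _ ⟨i, hi, rfl⟩ j hj
  by_contra hij
  exact hj (Finset.mem_filter.mpr ⟨Finset.mem_univ j, i, hi, hij⟩)

theorem rank_le_rankFormula_general {n : ℕ} (Q : Matrix (Fin n) (Fin n) ℂ) :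
    Q.rank ≤ rankFormula Q ∧
    ∀ S : Finset (Fin n), nonExpanding (adjOf Q) S →
      ¬ LinearIndependent ℂ (fun i : S => Q i) := by
  refine ⟨Finset.le_inf' _ _ fun S _ => ?_, fun S hS hli => ?_⟩
  · calc Q.rank ≤ Sᶜ.card + finrank ℂ (span ℂ (Q '' S)) := by
          rw [Matrix.rank_eq_finrank_span_row]
          exact finrank_span_range_le_card_compl_add Q.row S
      _ ≤ n - S.card + (nbr (adjOf Q) S).card := by
          rw [Finset.card_compl, Fintype.card_fin]
          exact Nat.add_le_add_left (finrank_span_rows_le_card_nbr Q S) _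
  · have hrows : Set.range (fun i : S => Q i) = Q '' S := (Set.image_eq_range Q S).symm
    have hrank := finrank_span_eq_card hli
    rw [Fintype.card_coe, hrows] at hrank
    exact (hrank ▸ finrank_span_rows_le_card_nbr Q S).not_gt hS

/-- For any `n × n` symmetric complex matrix `Q`,
`rank Q ≤ min_{S ⊆ V(G(Q))} (n - |S| + |N(S)|)`; in particular every
non-expanding set of rows of `Q` is linearly dependent. -/
theorem rank_le_rankFormula {n : ℕ} (Q : Matrix (Fin n) (Fin n) ℂ) (hQ : Q.IsSymm) :
    Q.rank ≤ rankFormula Q ∧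
    ∀ S : Finset (Fin n), nonExpanding (adjOf Q) S →
      ¬ LinearIndependent ℂ (fun i : S => Q i) :=
  rank_le_rankFormula_general Q
end

section
/- For any fixed constant c > 0, the probability that the Erdős–Rényi random graph G(n, (c·ln n)/n) is not locally sparse is O(n^{−4}). -/
open MeasureTheory Finset

attribute [local instance] Classical.propDecidable

set_option maxHeartbeats 800000

/-- The Erdős–Rényi adjacency relation obtained from i.i.d. Bernoulli edge
indicators (no loops): `i ~ j` iff `i ≠ j` and the indicator of the unordered
pair `{i,j}` is on. -/
def erAdj {n : ℕ} (ω : Fin n → Fin n → Bool) : Fin n → Fin n → Prop :=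
  fun i j => i ≠ j ∧ (if i ≤ j then ω i j else ω j i) = true

/-!
If `G(n, p)` is not locally sparse, some set `S` of `j` vertices spans at least `4j` edges, and
since there are no loops `4j ≤ j² - j`, i.e. `j ≥ 5`. A union bound over `S` and over the
`4j`-sets of pairs in `S × S` bounds the probability by `∑ⱼ C(n,j) C(j²,4j) p^{4j}`. By
`C(m,k) ≤ (em/k)^k` the `j`-th term is at most `Bʲ` with `B = e c⁴ (ln n)⁴ j³ / n³` for
`p = c ln n / n`. For `j ≤ 5 ln n` this gives `B ≤ 1/n`, and for `5 ln n ≤ j ≤ n/(ln n)^{3/2}` it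
gives `B ≤ e c⁴ / √(ln n) ≤ 1/e`; either way `Bʲ ≤ n⁻⁵`, and there are at most `n` values of `j`.
-/

open Filter Real
open scoped ENNReal

theorem Nat.choose_le_exp_mul_div_pow (M k : ℕ) : (M.choose k : ℝ) ≤ (exp 1 * M / k) ^ k := by
  rcases k.eq_zero_or_pos with rfl | hk
  · simp
  have hk' : (0 : ℝ) < k := by exact_mod_cast hk
  calc (M.choose k : ℝ) ≤ (M : ℝ) ^ k / k.factorial := Nat.choose_le_pow_div k M
    _ = (M / k : ℝ) ^ k * ((k : ℝ) ^ k / k.factorial) := by rw [div_pow]; field_simp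
    _ ≤ (M / k : ℝ) ^ k * exp k := by gcongr; exact pow_div_factorial_le_exp _ hk'.le k
    _ = (exp 1 * M / k) ^ k := by rw [← exp_one_pow]; ring

theorem Nat.choose_mul_self_four_mul_le (j : ℕ) :
    ((j * j).choose (4 * j) : ℝ) ≤ (j : ℝ) ^ (4 * j) := by
  rcases j.eq_zero_or_pos with rfl | hj
  · simp
  calc ((j * j).choose (4 * j) : ℝ) ≤ (exp 1 * (j * j : ℕ) / (4 * j : ℕ)) ^ (4 * j) :=
        Nat.choose_le_exp_mul_div_pow _ _
    _ = (exp 1 / 4 * j) ^ (4 * j) := by push_cast; field_simp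
    _ ≤ (j : ℝ) ^ (4 * j) := by
        gcongr
        calc exp 1 / 4 * j ≤ 1 * j := by gcongr; linarith [exp_one_lt_d9]
          _ = j := one_mul _

theorem choose_mul_choose_mul_pow_le (n j : ℕ) (p : ℝ) :
    (n.choose j : ℝ) * (j * j).choose (4 * j) * p ^ (4 * j) ≤ (exp 1 * n * j ^ 3 * p ^ 4) ^ j := by
  rcases j.eq_zero_or_pos with rfl | hj
  · simp
  rw [pow_mul]
  calc (n.choose j : ℝ) * (j * j).choose (4 * j) * (p ^ 4) ^ j
      ≤ (exp 1 * n / j) ^ j * (j : ℝ) ^ (4 * j) * (p ^ 4) ^ j := by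
        gcongr
        · exact Nat.choose_le_exp_mul_div_pow n j
        · exact Nat.choose_mul_self_four_mul_le j
    _ = (exp 1 * n * j ^ 3 * p ^ 4) ^ j := by
        rw [pow_mul, ← mul_pow, ← mul_pow]; congr 1; field_simp

theorem pow_le_inv_pow_of_le_inv {B x : ℝ} {j k : ℕ} (hB : 0 ≤ B) (hx : 1 ≤ x) (hBx : B ≤ x⁻¹)
    (hkj : k ≤ j) : B ^ j ≤ (x ^ k)⁻¹ :=
  calc B ^ j ≤ B ^ k := pow_le_pow_of_le_one hB (hBx.trans (inv_le_one_of_one_le₀ hx)) hkj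
    _ ≤ x⁻¹ ^ k := by gcongr
    _ = (x ^ k)⁻¹ := inv_pow x k

theorem pow_le_inv_pow_of_le_exp_neg_one {B x : ℝ} {j k : ℕ} (hB : 0 ≤ B) (hx : 0 < x)
    (hBe : B ≤ exp (-1)) (hkj : k * log x ≤ j) : B ^ j ≤ (x ^ k)⁻¹ :=
  calc B ^ j ≤ exp (-1) ^ j := by gcongr
    _ = exp (-j) := by rw [← exp_nat_mul]; ring_nf
    _ ≤ exp (-(k * log x)) := by gcongr
    _ = (x ^ k)⁻¹ := by rw [exp_neg, ← log_pow, exp_log (by positivity)]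

theorem bern_singleton_true (p : ℝ) : bern p {true} = ENNReal.ofReal p := by
  simp [bern, ENNReal.ofReal, ENNReal.smul_def, -Measure.coe_nnreal_smul]

theorem isProbabilityMeasure_bern {p : ℝ} (h0 : 0 ≤ p) (h1 : p ≤ 1) :
    IsProbabilityMeasure (bern p) := by
  constructor
  simp only [bern, Measure.coe_add, Measure.coe_smul, Pi.add_apply, Pi.smul_apply, measure_univ]
  rw [ENNReal.smul_def, ENNReal.smul_def, smul_eq_mul, smul_eq_mul, mul_one, mul_one,
    ← ENNReal.coe_add, ← Real.toNNReal_add h0 (by linarith)]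
  simp

theorem entriesMeasure_forall_eq_true {n : ℕ} {p : ℝ} (h0 : 0 ≤ p) (h1 : p ≤ 1)
    (E : Finset (Fin n × Fin n)) :
    entriesMeasure n p {ω | ∀ e ∈ E, ω e.1 e.2 = true} = ENNReal.ofReal p ^ #E := by
  have := isProbabilityMeasure_bern h0 h1
  have hpi : {ω : Fin n → Fin n → Bool | ∀ e ∈ E, ω e.1 e.2 = true} =
      Set.univ.pi fun i => Set.univ.pi fun j => if (i, j) ∈ E then {true} else Set.univ := by
    ext ω
    simp only [Set.mem_ofPred_eq, Set.mem_pi, Set.mem_univ, true_imp_iff, Prod.forall]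
    refine forall₂_congr fun i j => ?_
    split_ifs <;> simp [*]
  rw [hpi, entriesMeasure, Measure.pi_pi]
  simp_rw [Measure.pi_pi, apply_ite (bern p), bern_singleton_true, measure_univ]
  rw [← Fintype.prod_prod_type' (f := fun i j => if (i, j) ∈ E then ENNReal.ofReal p else 1),
    prod_ite_mem, univ_inter, prod_const]

noncomputable def denseSizes (n : ℕ) : Finset ℕ :=
  (Icc 5 n).filter fun j => (j : ℝ) ≤ n / log n ^ (3 / 2 : ℝ)

theorem inducedEdges_le_card_offDiag {n : ℕ} {A : Fin n → Fin n → Prop} (hA : ∀ v, ¬ A v v)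
    (S : Finset (Fin n)) : inducedEdges A S ≤ #S.offDiag :=
  card_le_card fun e he => by
    simp only [mem_filter, mem_univ, true_and] at he
    exact mem_offDiag.2 ⟨he.1, he.2.1, fun h => hA e.1 (h ▸ he.2.2.2)⟩

theorem exists_dense_of_not_locallySparse {n : ℕ} {ω : Fin n → Fin n → Bool}
    (h : ¬ locallySparse n (erAdj ω)) :
    ∃ j ∈ denseSizes n, ∃ S ∈ (univ : Finset (Fin n)).powersetCard j,
      ∃ E ∈ (S ×ˢ S).powersetCard (4 * j), ∀ e ∈ E, ω e.1 e.2 = true := by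
  simp only [locallySparse, not_forall, not_lt] at h
  obtain ⟨S, hne, hS, hdense⟩ := h
  have h5 : 5 ≤ #S := by
    have := hdense.trans (inducedEdges_le_card_offDiag (fun v h => h.1 rfl) S)
    rw [offDiag_card] at this
    have hmul : 5 * #S ≤ #S * #S := by
      have := Nat.add_le_of_le_sub (Nat.le_mul_self _) this
      linarith
    exact Nat.le_of_mul_le_mul_right hmul (card_pos.2 hne)
  obtain ⟨E, hE, hEcard⟩ := exists_subset_card_eq hdense
  refine ⟨#S, ?_, S, mem_powersetCard.2 ⟨subset_univ S, rfl⟩, E, ?_, fun e he => ?_⟩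
  · exact mem_filter.2 ⟨mem_Icc.2 ⟨h5, card_le_univ S |>.trans_eq (Fintype.card_fin n)⟩, hS⟩
  · refine mem_powersetCard.2 ⟨fun e he => ?_, hEcard⟩
    obtain ⟨-, h1, h2, -⟩ := mem_filter.1 (hE he)
    exact mem_product.2 ⟨h1, h2⟩
  · obtain ⟨-, -, -, hle, -, hω⟩ := mem_filter.1 (hE he)
    rwa [if_pos hle] at hω

theorem entriesMeasure_not_locallySparse_le {n : ℕ} {p : ℝ} (h0 : 0 ≤ p) (h1 : p ≤ 1) :
    entriesMeasure n p {ω | ¬ locallySparse n (erAdj ω)} ≤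
      ENNReal.ofReal
        (∑ j ∈ denseSizes n, (n.choose j : ℝ) * (j * j).choose (4 * j) * p ^ (4 * j)) := by
  calc entriesMeasure n p {ω | ¬ locallySparse n (erAdj ω)}
      ≤ entriesMeasure n p (⋃ j ∈ denseSizes n, ⋃ S ∈ (univ : Finset (Fin n)).powersetCard j,
          ⋃ E ∈ (S ×ˢ S).powersetCard (4 * j), {ω | ∀ e ∈ E, ω e.1 e.2 = true}) := by
        refine measure_mono fun ω hω => ?_
        simpa only [Set.mem_iUnion, exists_prop, Set.mem_ofPred_eq] using
          exists_dense_of_not_locallySparse hω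
    _ ≤ ∑ j ∈ denseSizes n, ∑ S ∈ (univ : Finset (Fin n)).powersetCard j,
          ∑ E ∈ (S ×ˢ S).powersetCard (4 * j),
            entriesMeasure n p {ω | ∀ e ∈ E, ω e.1 e.2 = true} := by
        refine (measure_biUnion_finset_le _ _).trans (sum_le_sum fun j _ => ?_)
        refine (measure_biUnion_finset_le _ _).trans (sum_le_sum fun S _ => ?_)
        exact measure_biUnion_finset_le _ _
    _ = ∑ j ∈ denseSizes n,
          (n.choose j : ℝ≥0∞) * (j * j).choose (4 * j) * ENNReal.ofReal p ^ (4 * j) := by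
        refine sum_congr rfl fun j _ => ?_
        rw [sum_congr rfl fun S hS => ?_, sum_const, card_powersetCard, card_univ, Fintype.card_fin,
          nsmul_eq_mul, mul_assoc]
        rw [sum_congr rfl fun E hE => by
            rw [entriesMeasure_forall_eq_true h0 h1, (mem_powersetCard.1 hE).2],
          sum_const, card_powersetCard, card_product, (mem_powersetCard.1 hS).2, nsmul_eq_mul]
    _ = ENNReal.ofReal
          (∑ j ∈ denseSizes n, (n.choose j : ℝ) * (j * j).choose (4 * j) * p ^ (4 * j)) := by
        rw [ENNReal.ofReal_sum_of_nonneg fun j _ => by positivity]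
        refine sum_congr rfl fun j _ => ?_
        rw [ENNReal.ofReal_mul (by positivity), ENNReal.ofReal_mul (by positivity),
          ENNReal.ofReal_natCast, ENNReal.ofReal_natCast, ENNReal.ofReal_pow h0]

theorem eventually_mul_log_pow_le (C : ℝ) (k : ℕ) : ∀ᶠ x in atTop, C * log x ^ k ≤ x := by
  filter_upwards [(isLittleO_pow_log_id_atTop.const_mul_left C).bound one_pos,
    eventually_ge_atTop 0] with x hx hx0
  simpa [abs_of_nonneg hx0] using (le_abs_self _).trans hx

-- `x` stands for `n`: these make `p ≤ 1`, and `B ≤ 1/n` resp. `B ≤ 1/e` in the two ranges of `j`.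
def IsLargeFor (c x : ℝ) : Prop :=
  1 ≤ x ∧ c * log x ≤ x ∧ 125 * exp 1 * c ^ 4 * log x ^ 7 ≤ x ∧ exp 1 ^ 2 * c ^ 4 ≤ √(log x)

theorem eventually_isLargeFor (c : ℝ) : ∀ᶠ x in atTop, IsLargeFor c x := by
  filter_upwards [eventually_ge_atTop 1, eventually_mul_log_pow_le c 1,
    eventually_mul_log_pow_le (125 * exp 1 * c ^ 4) 7,
    (tendsto_sqrt_atTop.comp tendsto_log_atTop).eventually_ge_atTop (exp 1 ^ 2 * c ^ 4)]
    with x h1 h2 h3 h4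
  exact ⟨h1, by simpa using h2, h3, h4⟩

theorem choose_mul_choose_mul_pow_le_inv_pow_five {c : ℝ} {n j : ℕ} (hn : IsLargeFor c n)
    (hj5 : 5 ≤ j) (hj : (j : ℝ) ≤ n / log n ^ (3 / 2 : ℝ)) :
    (n.choose j : ℝ) * (j * j).choose (4 * j) * (c * log n / n) ^ (4 * j) ≤ ((n : ℝ) ^ 5)⁻¹ := by
  obtain ⟨hn1, -, hsmall, hlarge⟩ := hn
  have hn0 : (0 : ℝ) < n := by linarith
  set L := log n
  have hL0 : 0 ≤ L := log_nonneg hn1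
  have hB : exp 1 * n * j ^ 3 * (c * L / n) ^ 4 = exp 1 * c ^ 4 * L ^ 4 * j ^ 3 / n ^ 3 := by
    field_simp
  refine (choose_mul_choose_mul_pow_le n j _).trans ?_
  rcases le_total (j : ℝ) (5 * L) with hjL | hjL
  · refine pow_le_inv_pow_of_le_inv (by positivity) hn1 ?_ hj5
    calc exp 1 * n * j ^ 3 * (c * L / n) ^ 4
        = exp 1 * c ^ 4 * L ^ 4 * j ^ 3 / n ^ 3 := hB
      _ ≤ exp 1 * c ^ 4 * L ^ 4 * (5 * L) ^ 3 / n ^ 3 := by gcongr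
      _ = 125 * exp 1 * c ^ 4 * L ^ 7 / n ^ 3 := by ring
      _ ≤ n / n ^ 3 := by gcongr
      _ = ((n : ℝ) ^ 2)⁻¹ := by field_simp
      _ ≤ (n : ℝ)⁻¹ := inv_anti₀ hn0 (by nlinarith)
  · refine pow_le_inv_pow_of_le_exp_neg_one (by positivity) hn0 ?_ (by exact_mod_cast hjL)
    have hL : 0 < L := hL0.lt_of_ne fun h => by
      rw [← h, zero_rpow (by norm_num), div_zero] at hj
      exact absurd hj (not_le.2 (by exact_mod_cast (by omega : 0 < j)))
    have hs3 : L ^ (3 / 2 : ℝ) = √L ^ 3 := by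
      rw [sqrt_eq_rpow, ← rpow_natCast, ← rpow_mul hL0]; norm_num
    rw [hs3] at hj
    have hs0 : 0 < √L := sqrt_pos.2 hL
    set s := √L
    have hLs : L = s ^ 2 := (sq_sqrt hL0).symm
    have hjs : j * s ^ 3 ≤ n := (le_div_iff₀ (by positivity)).1 hj
    rw [hB, hLs, div_le_iff₀ (by positivity)]
    calc exp 1 * c ^ 4 * (s ^ 2) ^ 4 * j ^ 3
        = exp (-1) * (exp 1 ^ 2 * c ^ 4) * s ^ 8 * j ^ 3 := by
          rw [exp_neg]; field_simp
      _ ≤ exp (-1) * s * s ^ 8 * j ^ 3 := by gcongr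
      _ = exp (-1) * (j * s ^ 3) ^ 3 := by ring
      _ ≤ exp (-1) * n ^ 3 := by gcongr

theorem sum_choose_mul_choose_mul_pow_le {c : ℝ} {n : ℕ} (hn : IsLargeFor c n) :
    ∑ j ∈ denseSizes n, (n.choose j : ℝ) * (j * j).choose (4 * j) * (c * log n / n) ^ (4 * j)
      ≤ 1 / (n : ℝ) ^ 4 := by
  have hn0 : (0 : ℝ) < n := by linarith [hn.1]
  have hcard : (#(denseSizes n) : ℝ) ≤ n := by
    exact_mod_cast (card_filter_le _ _).trans (by simp)
  calc _ ≤ #(denseSizes n) • ((n : ℝ) ^ 5)⁻¹ := by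
        refine sum_le_card_nsmul _ _ _ fun j hj => ?_
        rw [denseSizes, mem_filter, mem_Icc] at hj
        exact choose_mul_choose_mul_pow_le_inv_pow_five hn hj.1.1 hj.2
    _ ≤ n * ((n : ℝ) ^ 5)⁻¹ := by rw [nsmul_eq_mul]; gcongr
    _ = 1 / (n : ℝ) ^ 4 := by field_simp

/-- Lemma `sparseness`: for any fixed constant `c > 0`, the
probability that `G(n, c ln n / n)` is not locally sparse is `O(n^{-4})`. -/
theorem sparseness (c : ℝ) (hc : 0 < c) :
    ∃ C : ℝ, ∃ N : ℕ, ∀ n ≥ N,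
      entriesMeasure n (c * Real.log n / n) {ω | ¬ locallySparse n (erAdj ω)}
      ≤ ENNReal.ofReal (C / (n : ℝ) ^ (4 : ℕ)) := by
  obtain ⟨N, hN⟩ := eventually_atTop.1
    (tendsto_natCast_atTop_atTop.eventually (eventually_isLargeFor c))
  refine ⟨1, N, fun n hn => ?_⟩
  have hlarge : IsLargeFor c n := hN n hn
  have hp0 : 0 ≤ c * log n / n := by have := log_nonneg hlarge.1; positivity
  have hp1 : c * log n / n ≤ 1 := div_le_one_of_le₀ hlarge.2.1 (by positivity)
  exact (entriesMeasure_not_locallySparse_le hp0 hp1).trans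
    (ENNReal.ofReal_le_ofReal (sum_choose_mul_choose_mul_pow_le hlarge))
end

section
/- Let G' be a graph obtained from a graph G by adding one new vertex v together with an arbitrary set of edges incident to v (including possibly a loop at v). Let U(H) denote the maximum size of an (s−1)-unobstructed set of vertices of a graph H, and let Z be the number of vertices of G of degree at most s in G that are adjacent to v in G'. Then U(G') ≤ U(G) + Z + 1. -/
open MeasureTheory Finset

attribute [local instance] Classical.propDecidable

set_option maxHeartbeats 800000

/-- the Claim in the proof of Theorem `mainresult`: if `G'` is
obtained from `G` by adding one new vertex `v` (the last vertex of `Fin (n+1)`)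
together with arbitrary edges at `v` (possibly including a loop), `U(H)` denotes
the maximum size of an `(s-1)`-unobstructed set, and `Z` is the number of
vertices of `G` of degree at most `s` in `G` that are adjacent to `v` in `G'`,
then `U(G') ≤ U(G) + Z + 1`. -/
theorem maxUnobstructed_augment (s : ℕ) (hs : 1 ≤ s) {n : ℕ}
    (A' : Fin (n + 1) → Fin (n + 1) → Prop)
    (hsymm : ∀ i j, A' i j ↔ A' j i)
    (A : Fin n → Fin n → Prop)
    (hA : ∀ i j : Fin n, A i j ↔ A' i.castSucc j.castSucc) :
    maxTUnobstructed (s - 1) A' ≤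
      maxTUnobstructed (s - 1) A +
        (univ.filter fun u : Fin n =>
          deg A u ≤ s ∧ A' u.castSucc (Fin.last n)).card + 1 := by
  classical
  set Z : Finset (Fin n) :=
    (univ.filter fun u : Fin n => deg A u ≤ s ∧ A' u.castSucc (Fin.last n)) with hZdef
  apply Finset.sup_le
  intro S' hS'
  simp only [Finset.mem_filter, Finset.mem_univ, true_and] at hS'
  set S₀ : Finset (Fin n) :=
    (univ.filter fun u : Fin n => u.castSucc ∈ S' ∧ u ∉ Z) with hS₀def
  have hinj : Function.Injective (Fin.castSucc : Fin n → Fin (n + 1)) :=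
    Fin.castSucc_injective n
  have hunob : tUnobstructed (s - 1) A S₀ := by
    intro T hT hTcard hne
    have hT'sub : T.image Fin.castSucc ⊆ S' := by
      intro x hx
      obtain ⟨u, hu, rfl⟩ := Finset.mem_image.mp hx
      exact ((Finset.mem_filter.mp (hT hu)).2).1
    have hcard : (T.image Fin.castSucc).card = T.card :=
      Finset.card_image_of_injective _ hinj
    have hnot := hS' _ hT'sub (by rw [hcard]; exact hTcard)
    have hnbr : nbr A' (T.image Fin.castSucc) ⊆
        insert (Fin.last n) ((nbr A T).image Fin.castSucc) := by
      intro x hx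
      simp only [nbr, Finset.mem_filter, Finset.mem_univ, true_and] at hx
      obtain ⟨u', hu', hadj⟩ := hx
      obtain ⟨u, hu, rfl⟩ := Finset.mem_image.mp hu'
      rcases Fin.eq_castSucc_or_eq_last x with ⟨y, rfl⟩ | rfl
      · refine Finset.mem_insert_of_mem (Finset.mem_image.mpr ⟨y, ?_, rfl⟩)
        simp only [nbr, Finset.mem_filter, Finset.mem_univ, true_and]
        exact ⟨u, hu, (hA u y).mpr hadj⟩
      · exact Finset.mem_insert_self _ _
    have hlast : Fin.last n ∈ nbr A' (T.image Fin.castSucc) := by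
      by_contra hno
      have hsub2 : nbr A' (T.image Fin.castSucc) ⊆ (nbr A T).image Fin.castSucc := by
        intro x hx
        rcases Finset.mem_insert.mp (hnbr hx) with rfl | h
        · exact absurd hx hno
        · exact h
      have hle := Finset.card_le_card hsub2
      rw [Finset.card_image_of_injective _ hinj] at hle
      exact hnot (show (nbr A' (T.image Fin.castSucc)).card <
        (T.image Fin.castSucc).card by rw [hcard]; exact lt_of_le_of_lt hle hne)
    -- get the witness vertex w ∈ T adjacent to last
    simp only [nbr, Finset.mem_filter, Finset.mem_univ, true_and] at hlast
    obtain ⟨u', hu', hadj⟩ := hlast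
    obtain ⟨w, hw, rfl⟩ := Finset.mem_image.mp hu'
    have hdeg : deg A w ≤ s := by
      have hsub : (univ.filter fun u => A w u) ⊆ nbr A T := by
        intro x hx
        simp only [nbr, Finset.mem_filter, Finset.mem_univ, true_and] at hx ⊢
        exact ⟨w, hw, hx⟩
      have h1 : deg A w ≤ (nbr A T).card := Finset.card_le_card hsub
      have h2 : (nbr A T).card < T.card := hne
      omega
    have hwZ : w ∈ Z := by
      rw [hZdef]
      simp only [Finset.mem_filter, Finset.mem_univ, true_and]
      exact ⟨hdeg, hadj⟩
    exact ((Finset.mem_filter.mp (hT hw)).2).2 hwZ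
  have hS₀le : S₀.card ≤ maxTUnobstructed (s - 1) A := by
    apply Finset.le_sup
    simp only [Finset.mem_filter, Finset.mem_univ, true_and]
    exact hunob
  have hcover : S' ⊆ insert (Fin.last n) ((S₀ ∪ Z).image Fin.castSucc) := by
    intro x hx
    rcases Fin.eq_castSucc_or_eq_last x with ⟨u, rfl⟩ | rfl
    · refine Finset.mem_insert_of_mem (Finset.mem_image.mpr ⟨u, ?_, rfl⟩)
      by_cases hu : u ∈ Z
      · exact Finset.mem_union_right _ hu
      · refine Finset.mem_union_left _ ?_
        rw [hS₀def]
        simp only [Finset.mem_filter, Finset.mem_univ, true_and]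
        exact ⟨hx, hu⟩
    · exact Finset.mem_insert_self _ _
  have h1 : S'.card ≤ ((S₀ ∪ Z).image Fin.castSucc).card + 1 :=
    le_trans (Finset.card_le_card hcover) (Finset.card_insert_le _ _)
  have h2 : ((S₀ ∪ Z).image Fin.castSucc).card ≤ S₀.card + Z.card := by
    rw [Finset.card_image_of_injective _ hinj]
    exact Finset.card_union_le _ _
  omega
end

section
/- Let G be a well-separated graph on n vertices (for a fixed positive integer s with ln ln n ≥ s), and let T be the union of all minimal non-expanding vertex subsets of G of size at most s−1. Then N(T) ∩ T = ∅. -/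
open MeasureTheory Finset

attribute [local instance] Classical.propDecidable

set_option maxHeartbeats 800000

/-- `T`: the union of all minimal non-expanding vertex subsets of size at most
`s - 1`. -/
noncomputable def Tset {n : ℕ} (s : ℕ) (A : Fin n → Fin n → Prop) : Finset (Fin n) :=
  univ.filter fun v => ∃ S : Finset (Fin n),
    v ∈ S ∧ S.card ≤ s - 1 ∧ minNonExpanding A S

section TcyclesAux

variable {n : ℕ} {A : Fin n → Fin n → Prop}

lemma mem_nbr_iff {S : Finset (Fin n)} {v : Fin n} :
    v ∈ nbr A S ↔ ∃ u ∈ S, A u v := by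
  simp [nbr]

/-- In a minimal non-expanding set of size at least 2, every vertex of `N(S)`
has at least two neighbours inside `S`. -/
lemma two_nbrs (hsymm : ∀ i j, A i j ↔ A j i) {S : Finset (Fin n)}
    (hmin : minNonExpanding A S) (h2 : 2 ≤ S.card) {c : Fin n} (hc : c ∈ nbr A S) :
    ∃ d₁ ∈ S, ∃ d₂ ∈ S, d₁ ≠ d₂ ∧ A c d₁ ∧ A c d₂ := by
  obtain ⟨u₀, hu₀S, hu₀c⟩ := mem_nbr_iff.1 hc
  have hcu₀ : A c u₀ := (hsymm u₀ c).1 hu₀c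
  by_cases hex : ∃ d ∈ S, A c d ∧ d ≠ u₀
  · obtain ⟨d, hdS, hcd, hdu⟩ := hex
    exact ⟨u₀, hu₀S, d, hdS, Ne.symm hdu, hcu₀, hcd⟩
  · push_neg at hex
    have hsub : nbr A (S.erase u₀) ⊆ (nbr A S).erase c := by
      intro v hv
      obtain ⟨t, htS', htv⟩ := mem_nbr_iff.1 hv
      refine Finset.mem_erase.2 ⟨?_, mem_nbr_iff.2 ⟨t, Finset.mem_of_mem_erase htS', htv⟩⟩
      rintro rfl
      exact (Finset.ne_of_mem_erase htS')
        (hex t (Finset.mem_of_mem_erase htS') ((hsymm t v).1 htv))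
    have h1 : (nbr A (S.erase u₀)).card ≤ ((nbr A S).erase c).card :=
      Finset.card_le_card hsub
    have h2' : ((nbr A S).erase c).card = (nbr A S).card - 1 :=
      Finset.card_erase_of_mem hc
    have h3 : (nbr A S).card < S.card := hmin.1
    have h4 : (S.erase u₀).card = S.card - 1 := Finset.card_erase_of_mem hu₀S
    have hne' : nonExpanding A (S.erase u₀) := by
      unfold nonExpanding; omega
    exact absurd hne' (hmin.2 _ (Finset.erase_ssubset hu₀S))

lemma mem_Tset_of {s : ℕ} {S : Finset (Fin n)} {v : Fin n} (hv : v ∈ S)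
    (hc : S.card ≤ s - 1) (hm : minNonExpanding A S) : v ∈ Tset s A := by
  refine Finset.mem_filter.2 ⟨Finset.mem_univ _, S, hv, hc, hm⟩

lemma deg_lt_of_mem_Tset {s : ℕ} {v : Fin n} (hv : v ∈ Tset s A) : deg A v < s := by
  obtain ⟨-, S, hvS, hcS, hm⟩ := Finset.mem_filter.1 hv
  have h1 : deg A v ≤ (nbr A S).card := by
    refine Finset.card_le_card ?_
    intro u hu
    exact mem_nbr_iff.2 ⟨v, hvS, (Finset.mem_filter.1 hu).2⟩
  have h2 : (nbr A S).card < S.card := hm.1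
  have h3 : 1 ≤ S.card := Finset.card_pos.2 ⟨v, hvS⟩
  omega

lemma card_two_of_min {S : Finset (Fin n)} (hm : minNonExpanding A S) {a b : Fin n} (haS : a ∈ S)
    (hab : A a b) : 2 ≤ S.card := by
  have hb : b ∈ nbr A S := mem_nbr_iff.2 ⟨a, haS, hab⟩
  have h1 : 1 ≤ (nbr A S).card := Finset.card_pos.2 ⟨b, hb⟩
  have h2 : (nbr A S).card < S.card := hm.1
  omega

/-- The auxiliary non-backtracking walk. -/
noncomputable def walkAux (A : Fin n → Fin n → Prop) (U : Finset (Fin n))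
    (u x : Fin n) : ℕ → Fin n × Fin n :=
  fun k => Nat.rec (u, x)
    (fun _ q => (q.2,
      if h : ∃ c, A q.2 c ∧ c ≠ q.1 ∧ c ≠ q.2 ∧ c ∈ U then h.choose else u)) k

end TcyclesAux

/-- Lemma `Tcycles`: for a well-separated graph `G` on `n`
vertices (with `ln ln n ≥ s`), the union `T` of all minimal non-expanding
vertex subsets of size at most `s-1` satisfies `N(T) ∩ T = ∅`. -/
theorem Tcycles (s n : ℕ) (hs : 1 ≤ s) (hn : (s : ℝ) ≤ Real.log (Real.log n))
    (A : Fin n → Fin n → Prop) (hsymm : ∀ i j, A i j ↔ A j i)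
    (hws : wellSeparated n s A) :
    nbr A (Tset s A) ∩ Tset s A = ∅ := by
  rw [Finset.eq_empty_iff_forall_notMem]
  intro x hx
  obtain ⟨hx1, hx2⟩ := Finset.mem_inter.1 hx
  obtain ⟨u, huT, hux⟩ := mem_nbr_iff.1 hx1
  -- vertices of `Tset` have low degree and no loops
  have hlowT : ∀ v ∈ Tset s A, (deg A v : ℝ) ≤ Real.log (Real.log n) := by
    intro v hv
    have h1 : deg A v < s := deg_lt_of_mem_Tset hv
    have h2 : (deg A v : ℝ) ≤ (s : ℝ) := by exact_mod_cast Nat.le_of_lt h1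
    exact h2.trans hn
  have hnoloop : ∀ v ∈ Tset s A, ¬ A v v := by
    intro v hv hA
    haveI : Subsingleton (ZMod 1) := ZMod.subsingleton_iff.2 rfl
    exact hws.2 v (hlowT v hv) 1 (Or.inl rfl)
      ⟨fun _ => v, fun a b _ => Subsingleton.elim a b, fun _ => hA, 0, rfl⟩
  by_cases hueq : u = x
  · subst hueq; exact hnoloop u hx2 hux
  obtain ⟨-, S₁, huS₁, hc₁, hm₁⟩ := Finset.mem_filter.1 huT
  obtain ⟨-, S₂, hxS₂, hc₂, hm₂⟩ := Finset.mem_filter.1 hx2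
  set U : Finset (Fin n) := S₁ ∪ S₂ with hU
  have hUT : ∀ v ∈ U, v ∈ Tset s A := by
    intro v hv
    rcases Finset.mem_union.1 hv with h | h
    · exact mem_Tset_of h hc₁ hm₁
    · exact mem_Tset_of h hc₂ hm₂
  -- the one-step extension lemma
  have hstep : ∀ a b : Fin n, a ∈ U → b ∈ U → A a b → a ≠ b →
      ∃ c, A b c ∧ c ≠ a ∧ c ≠ b ∧ c ∈ U := by
    intro a b ha hb hab hne'
    obtain ⟨S, hmS, haS, hSU⟩ :
        ∃ S, minNonExpanding A S ∧ a ∈ S ∧ S ⊆ U := by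
      rcases Finset.mem_union.1 ha with h | h
      · exact ⟨S₁, hm₁, h, Finset.subset_union_left⟩
      · exact ⟨S₂, hm₂, h, Finset.subset_union_right⟩
    have h2 : 2 ≤ S.card := card_two_of_min hmS haS hab
    have hbnbr : b ∈ nbr A S := mem_nbr_iff.2 ⟨a, haS, hab⟩
    obtain ⟨d₁, hd₁, d₂, hd₂, hdne, hbd₁, hbd₂⟩ := two_nbrs hsymm hmS h2 hbnbr
    obtain ⟨d, hdS, hbd, hda⟩ : ∃ d, d ∈ S ∧ A b d ∧ d ≠ a := by
      by_cases h : d₁ = a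
      · exact ⟨d₂, hd₂, hbd₂, by rintro rfl; exact hdne h⟩
      · exact ⟨d₁, hd₁, hbd₁, h⟩
    have hdb : d ≠ b := by
      rintro rfl; exact hnoloop d (hUT d hb) hbd
    exact ⟨d, hbd, hda, hdb, hSU hdS⟩
  -- the walk
  set p : ℕ → Fin n × Fin n := walkAux A U u x with hp
  have hpsucc : ∀ k, p (k + 1) = ((p k).2,
      if h : ∃ c, A (p k).2 c ∧ c ≠ (p k).1 ∧ c ≠ (p k).2 ∧ c ∈ U
      then h.choose else u) := fun k => rfl
  have hInv : ∀ k, (p k).1 ∈ U ∧ (p k).2 ∈ U ∧ A (p k).1 (p k).2 ∧ (p k).1 ≠ (p k).2 := by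
    intro k
    induction k with
    | zero =>
      exact ⟨Finset.mem_union_left _ huS₁, Finset.mem_union_right _ hxS₂, hux, hueq⟩
    | succ k ih =>
      have hex : ∃ c, A (p k).2 c ∧ c ≠ (p k).1 ∧ c ≠ (p k).2 ∧ c ∈ U :=
        hstep (p k).1 (p k).2 ih.1 ih.2.1 ih.2.2.1 ih.2.2.2
      have hq : p (k + 1) = ((p k).2, hex.choose) := by
        rw [hpsucc k, dif_pos hex]
      obtain ⟨hA', hne1, hne2, hU'⟩ := hex.choose_spec
      rw [hq]
      exact ⟨ih.2.1, hU', hA', Ne.symm hne2⟩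
  have hback : ∀ k, (p (k + 1)).2 ≠ (p k).1 := by
    intro k
    have ih := hInv k
    have hex : ∃ c, A (p k).2 c ∧ c ≠ (p k).1 ∧ c ≠ (p k).2 ∧ c ∈ U :=
      hstep (p k).1 (p k).2 ih.1 ih.2.1 ih.2.2.1 ih.2.2.2
    have hq : p (k + 1) = ((p k).2, hex.choose) := by
      rw [hpsucc k, dif_pos hex]
    rw [hq]
    exact hex.choose_spec.2.1
  set w : ℕ → Fin n := fun k => (p k).1 with hw
  have hw1 : ∀ k, w (k + 1) = (p k).2 := by
    intro k; rw [hw]; simp only; rw [hpsucc k]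
  have hwU : ∀ k, w k ∈ U := fun k => (hInv k).1
  have hadj : ∀ k, A (w k) (w (k + 1)) := by
    intro k; rw [hw1 k]; exact (hInv k).2.2.1
  have hne1' : ∀ k, w (k + 1) ≠ w k := by
    intro k; rw [hw1 k]; exact Ne.symm (hInv k).2.2.2
  have hne2' : ∀ k, w (k + 2) ≠ w k := by
    intro k
    have := hw1 (k + 1)
    rw [show k + 2 = k + 1 + 1 from rfl, this]
    exact hback k
  -- find the first repetition
  obtain ⟨a, b, hab, hwab⟩ := Finite.exists_ne_map_eq_of_infinite w
  have hQ : ∃ j, ∃ k, k < j ∧ w k = w j := by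
    rcases Nat.lt_or_ge a b with h | h
    · exact ⟨b, a, h, hwab⟩
    · exact ⟨a, b, lt_of_le_of_ne h (Ne.symm hab), hwab.symm⟩
  set j := Nat.find hQ with hj
  obtain ⟨k, hkj, hwkj⟩ := Nat.find_spec hQ
  rw [← hj] at hkj hwkj
  have hinj : ∀ i₁ i₂, i₁ < j → i₂ < j → w i₁ = w i₂ → i₁ = i₂ := by
    intro i₁ i₂ h1 h2 he
    by_contra hne''
    rcases Nat.lt_or_ge i₁ i₂ with h | h
    · exact Nat.find_min hQ h2 ⟨i₁, h, he⟩
    · exact Nat.find_min hQ h1 ⟨i₂, lt_of_le_of_ne h (Ne.symm hne''), he.symm⟩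
  have hk3 : k + 3 ≤ j := by
    have h1 : j ≠ k + 1 := by
      intro h; rw [h] at hwkj; exact hne1' k hwkj.symm
    have h2 : j ≠ k + 2 := by
      intro h; rw [h] at hwkj; exact hne2' k hwkj.symm
    omega
  set L := j - k with hL
  have hL3 : 3 ≤ L := by omega
  have hLj : k + L = j := by omega
  have hjU : j ≤ U.card := by
    have h := Finset.card_le_card_of_injOn w (fun i hi => hwU i)
      (fun i₁ h1 i₂ h2 he => hinj i₁ i₂
        (Finset.mem_range.1 h1) (Finset.mem_range.1 h2) he)
    simpa using h
  have hL12 : L ≤ 12 * s := by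
    have hU2 : U.card ≤ S₁.card + S₂.card := Finset.card_union_le _ _
    omega
  haveI : NeZero L := ⟨by omega⟩
  haveI : Fact (1 < L) := ⟨by omega⟩
  set f : ZMod L → Fin n := fun i => w (k + i.val) with hf
  have finj : Function.Injective f := by
    intro i₁ i₂ h
    have v1 : i₁.val < L := ZMod.val_lt i₁
    have v2 : i₂.val < L := ZMod.val_lt i₂
    have := hinj (k + i₁.val) (k + i₂.val) (by omega) (by omega) h
    exact ZMod.val_injective L (by omega)
  have fadj : ∀ i, A (f i) (f (i + 1)) := by
    intro i
    have hv : i.val < L := ZMod.val_lt i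
    have hadd : (i + 1).val = (i.val + 1) % L := by
      rw [ZMod.val_add, ZMod.val_one]
    by_cases hlast : i.val + 1 = L
    · have h0 : (i + 1).val = 0 := by rw [hadd, hlast, Nat.mod_self]
      show A (w (k + i.val)) (w (k + (i + 1).val))
      rw [h0]
      have h1 := hadj (k + i.val)
      rw [show k + i.val + 1 = j from by omega] at h1
      rw [← hwkj] at h1
      simpa using h1
    · have hlt : i.val + 1 < L := by omega
      have h0 : (i + 1).val = i.val + 1 := by rw [hadd, Nat.mod_eq_of_lt hlt]
      show A (w (k + i.val)) (w (k + (i + 1).val))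
      rw [h0, show k + (i.val + 1) = k + i.val + 1 from by omega]
      exact hadj (k + i.val)
  have hlow : (deg A (w k) : ℝ) ≤ Real.log (Real.log n) :=
    hlowT _ (hUT _ (hwU k))
  refine hws.2 (w k) hlow L (Or.inr ⟨hL3, hL12⟩) ⟨f, finj, fadj, 0, ?_⟩
  show w (k + (0 : ZMod L).val) = w k
  rw [ZMod.val_zero, Nat.add_zero]
end

section
/- Let s be a fixed positive integer, 0 < p < 1/2, and let n be sufficiently large (depending on s). If Q is an n×n symmetric complex matrix that is good and (s−1)-saturated, then every linearly dependent set of rows of Q contains a non-expanding set of size at most s−1. -/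
open MeasureTheory Finset

attribute [local instance] Classical.propDecidable

set_option maxHeartbeats 800000

/-!
Suppose `R` contains no small non-expanding set and take a minimal dependent `S ⊆ R`. A
dependence among the rows of `S` has full support, so no vertex `w` is adjacent to exactly one
vertex of `S`: column `w` of the dependence would consist of a single nonzero term. Hence `S`,
and a minimal non-nearly-nice `T ⊆ S`, are not nearly nice, and goodness forces `|T| > k`.
On the other hand every `v ∈ S` has degree `< s`: extend the independent set `S \ {v}` to a
basis `B` of the row space; `v ∉ B` and `B ∪ {v}` is larger than the rank, so by saturation it
contains a non-expanding set of size `≤ s - 1`, which must contain `v` because independent sets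
expand. Thus `k < |S| ≤ 1 / (p ln n)`, which is false for large `n`.
-/

open Real

section MinimalDependent

variable {ι R M : Type*} [Ring R] [AddCommGroup M] [Module R M] {v : ι → M}

lemma exists_sum_smul_eq_zero_of_minimal_not_linearIndepOn {S : Finset ι}
    (hS : Minimal (fun S : Finset ι => ¬ LinearIndepOn R v S) S) :
    ∃ c : ι → R, ∑ i ∈ S, c i • v i = 0 ∧ ∀ i ∈ S, c i ≠ 0 := by
  classical
  obtain ⟨c, hc, i₀, hi₀, hci₀⟩ := not_linearIndepOn_finset_iff.1 hS.prop
  refine ⟨c, hc, fun i hi hci => hci₀ ?_⟩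
  have hindep : LinearIndepOn R v (S.erase i) :=
    not_not.1 (hS.not_prop_of_lt (Finset.erase_ssubset hi))
  have hsum : ∑ j ∈ S.erase i, c j • v j = 0 := by
    rw [← Finset.add_sum_erase S _ hi, hci, zero_smul, zero_add] at hc
    exact hc
  exact linearIndepOn_finset_iff.1 hindep c hsum i₀
    (Finset.mem_erase.2 ⟨fun h => hci₀ (h ▸ hci), hi₀⟩)

end MinimalDependent

lemma Matrix.exists_linearIndepOn_superset_rank_le {m n K : Type*} [Fintype m] [Fintype n]
    [Field K] (A : Matrix m n K) {I : Finset m} (hI : LinearIndepOn K A.row I) :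
    ∃ B : Finset m, I ⊆ B ∧ LinearIndepOn K A.row B ∧ A.rank ≤ B.card := by
  classical
  obtain ⟨B, -, hIB, hspan, hB⟩ := exists_linearIndepOn_extension hI (Set.subset_univ _)
  lift B to Finset m using B.toFinite
  refine ⟨B, by exact_mod_cast hIB, hB, ?_⟩
  rw [Matrix.rank_eq_finrank_span_row]
  calc Module.finrank K (Submodule.span K (Set.range A.row))
      ≤ Module.finrank K (Submodule.span K (↑(B.image A.row) : Set (n → K))) := by
        refine Submodule.finrank_mono (Submodule.span_le.2 ?_)
        rw [Finset.coe_image, ← Set.image_univ]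
        exact hspan
    _ ≤ (B.image A.row).card := finrank_span_finset_le_card _
    _ ≤ B.card := Finset.card_image_le

variable {n : ℕ}

lemma deg_le_card_nbr (A : Fin n → Fin n → Prop) {T : Finset (Fin n)} {v : Fin n}
    (hv : v ∈ T) : deg A v ≤ (nbr A T).card :=
  Finset.card_le_card fun _ hu =>
    Finset.mem_filter.2 ⟨Finset.mem_univ _, v, hv, (Finset.mem_filter.1 hu).2⟩

variable {Q : Matrix (Fin n) (Fin n) ℂ}

lemma card_le_card_nbr_of_linearIndepOn {T : Finset (Fin n)} (hT : LinearIndepOn ℂ Q T) :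
    T.card ≤ (nbr (adjOf Q) T).card := by
  set M : Matrix T (Fin n) ℂ := Q.submatrix Subtype.val id
  have hM : M.rank = T.card := by
    simpa using LinearIndependent.rank_matrix (M := M) hT
  rw [← hM, ← Matrix.rank_transpose]
  refine Matrix.rank_le_card_of_support_subset _ _ fun j hj => ?_
  obtain ⟨i, hi⟩ := Function.ne_iff.1 hj
  exact Finset.mem_filter.2 ⟨Finset.mem_univ _, i, i.2, hi⟩

lemma not_linearIndepOn_of_nonExpanding {T : Finset (Fin n)}
    (hT : nonExpanding (adjOf Q) T) : ¬ LinearIndepOn ℂ Q T :=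
  fun h => (card_le_card_nbr_of_linearIndepOn h).not_gt hT

lemma not_nearlyNice_of_sum_smul_eq_zero (hQ : Q.IsSymm) {S : Finset (Fin n)} {c : Fin n → ℂ}
    (hc : ∑ i ∈ S, c i • Q i = 0) (hc0 : ∀ i ∈ S, c i ≠ 0) :
    ¬ nearlyNice (adjOf Q) S := by
  intro hnice
  obtain ⟨w, hw⟩ := Finset.card_pos.1 hnice
  obtain ⟨u, hu⟩ := Finset.card_eq_one.1 (Finset.mem_filter.1 hw).2
  obtain ⟨huS, hwu⟩ := Finset.mem_filter.1 (hu ▸ Finset.mem_singleton_self u)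
  have hcol : ∑ i ∈ S, c i * Q w i = 0 := by
    simpa [Finset.sum_apply, hQ.apply] using congrFun hc w
  rw [← Finset.sum_filter_of_ne (p := fun i => adjOf Q w i)
    (fun i _ h => right_ne_zero_of_mul h), hu, Finset.sum_singleton] at hcol
  exact mul_ne_zero (hc0 u huS) hwu hcol

lemma exists_nonExpanding_of_rank_lt {t : ℕ} (hsat : saturated t Q) {U : Finset (Fin n)}
    (hU : Q.rank < U.card) : ∃ T ⊆ U, T.card ≤ t ∧ nonExpanding (adjOf Q) T := by
  by_contra! h
  have hle : U.card ≤ maxTUnobstructed t (adjOf Q) :=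
    Finset.le_sup (f := Finset.card) (Finset.mem_filter.2 ⟨Finset.mem_univ _, h⟩)
  rw [saturated] at hsat
  omega

lemma deg_lt_of_saturated {t : ℕ} (hsat : saturated t Q) {S : Finset (Fin n)} {v : Fin n}
    (hS : ¬ LinearIndepOn ℂ Q S) (hv : LinearIndepOn ℂ Q (S.erase v)) :
    deg (adjOf Q) v < t := by
  obtain ⟨B, hSB, hB, hrank⟩ := Q.exists_linearIndepOn_superset_rank_le hv
  have hvB : v ∉ B := fun hvB => hS <| hB.mono <| by
    exact_mod_cast (Finset.insert_erase_subset v S).trans (Finset.insert_subset hvB hSB)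
  obtain ⟨T, hTB, hTt, hT⟩ := exists_nonExpanding_of_rank_lt hsat
    (U := insert v B) (by rw [Finset.card_insert_of_notMem hvB]; omega)
  have hvT : v ∈ T := by
    by_contra hvT
    exact not_linearIndepOn_of_nonExpanding hT
      (hB.mono (by exact_mod_cast (Finset.subset_insert_iff_of_notMem hvT).1 hTB))
  have := deg_le_card_nbr (adjOf Q) (T := T) hvT
  unfold nonExpanding at hT
  omega

lemma one_div_lt_loglog_div_add_one {x p : ℝ} (hx : exp (exp 1) ≤ x) (hp : 0 < p) :
    1 / (p * log x) < log (log x) / (2 * p) + 1 := by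
  have he : 2 ≤ exp 1 := by linarith [add_one_le_exp (1 : ℝ)]
  have hlog : exp 1 ≤ log x := (le_log_iff_exp_le ((exp_pos _).trans_le hx)).2 hx
  have hloglog : 1 ≤ log (log x) := (le_log_iff_exp_le ((exp_pos _).trans_le hlog)).2 hlog
  have hpos : 0 < p * log x := mul_pos hp (by linarith)
  rw [div_lt_iff₀ hpos]
  have : (log (log x) / (2 * p) + 1) * (p * log x) = log (log x) * log x / 2 + p * log x := by
    field_simp
  rw [this]
  nlinarith

theorem good_saturated_dependent_general (s : ℕ) :
    ∃ N : ℕ, ∀ n ≥ N, ∀ p : ℝ, 0 < p → p < 1 / 2 →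
      ∀ Q : Matrix (Fin n) (Fin n) ℂ, Q.IsSymm →
        goodMatrix n s p Q → saturated (s - 1) Q →
        ∀ R : Finset (Fin n), ¬ LinearIndependent ℂ (fun i : R => Q i) →
          ∃ T ⊆ R, T.card ≤ s - 1 ∧ nonExpanding (adjOf Q) T := by
  refine ⟨⌈exp (exp 1)⌉₊, fun n hn p hp _ Q hQ hgood hsat R hR => ?_⟩
  by_contra! hR_unobstructed
  obtain ⟨S, hSR, hS⟩ :=
    exists_minimal_le_of_wellFoundedLT (fun S : Finset (Fin n) => ¬ LinearIndepOn ℂ Q S) R hR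
  obtain ⟨c, hc, hc0⟩ := exists_sum_smul_eq_zero_of_minimal_not_linearIndepOn hS
  have hS_ne : S.Nonempty :=
    Finset.nonempty_iff_ne_empty.2 fun h => hS.prop (by simpa [h] using linearIndepOn_empty ℂ Q)
  obtain ⟨T, hTS, hT⟩ := exists_minimal_le_of_wellFoundedLT
    (fun T : Finset (Fin n) => T.Nonempty ∧ ¬ nearlyNice (adjOf Q) T) S
    ⟨hS_ne, not_nearlyNice_of_sum_smul_eq_zero hQ hc hc0⟩
  obtain ⟨-, hgood₂, hgood₃, -⟩ := hgood
  rcases hgood₂ T hT.prop.1 hT.prop.2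
      (fun U hU hU_ne => not_not.1 fun h => hT.not_prop_of_lt hU ⟨hU_ne, h⟩) with
    hT_big | ⟨hT_small, hT_ne⟩
  · have hS_low : S ⊆ Finset.univ.filter (deg (adjOf Q) · < s) := fun v hv =>
      Finset.mem_filter.2 ⟨Finset.mem_univ _, (deg_lt_of_saturated hsat hS.prop
        (not_not.1 (hS.not_prop_of_lt (Finset.erase_ssubset hv)))).trans_le (Nat.sub_le s 1)⟩
    have hcard : (T.card : ℝ) ≤ (Finset.univ.filter (deg (adjOf Q) · < s)).card := by
      exact_mod_cast (Finset.card_le_card hTS).trans (Finset.card_le_card hS_low)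
    have := one_div_lt_loglog_div_add_one (Nat.ceil_le.1 hn) hp
    linarith
  · exact hR_unobstructed T (hTS.trans hSR) hT_small hT_ne

/-- for fixed positive integer `s`, `0 < p < 1/2` and `n`
sufficiently large (depending on `s`): if an `n × n` symmetric complex matrix
`Q` is good and `(s-1)`-saturated, then every linearly dependent set of rows of
`Q` contains a non-expanding set of size at most `s-1`. -/
theorem good_saturated_dependent (s : ℕ) (hs : 1 ≤ s) :
    ∃ N : ℕ, ∀ n ≥ N, ∀ p : ℝ, 0 < p → p < 1 / 2 →
      ∀ Q : Matrix (Fin n) (Fin n) ℂ, Q.IsSymm →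
        goodMatrix n s p Q → saturated (s - 1) Q →
        ∀ R : Finset (Fin n), ¬ LinearIndependent ℂ (fun i : R => Q i) →
          ∃ T ⊆ R, T.card ≤ s - 1 ∧ nonExpanding (adjOf Q) T :=
  good_saturated_dependent_general s
end
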